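/- arXiv:2308.01705 — 4 statements merged into one kernel-verified Lean document; each statement's English description precedes it below -/
import Mathlib

section
/- Let G be a normed space, let F₁,…,F_M be subsets of a set F, let S : F → G, and suppose dist_G(S(F_i), S(F_{i'})) ≥ c > 0 for all i ≠ i'. Let X be an F-valued random variable and Ω' ⊆ {X ∈ ∪_i F_i} an event. Then for every g ∈ G, E[‖S(X) − g‖_G · 1_{Ω'}] ≥ c · min{ P(Ω')/2 , P(Ω') − max_{i∈[M]} P(Ω' ∩ {X ∈ F_i}) }. -/
open MeasureTheory

theorem conditional_average_lower_bound
    {Ω : Type*} [MeasureSpace Ω] [IsProbabilityMeasure (volume : Measure Ω)]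
    {F : Type*} {G : Type*} [NormedAddCommGroup G]
    (M : ℕ) (hM : 0 < M) (Fi : Fin M → Set F) (S : F → G) (c : ℝ) (hc : 0 < c)
    (hsep : ∀ i i' : Fin M, i ≠ i' →
      ∀ a ∈ S '' (Fi i), ∀ b ∈ S '' (Fi i'), c ≤ ‖a - b‖)
    (X : Ω → F) (Ω' : Set Ω) (hΩ'meas : MeasurableSet Ω')
    (hΩ' : Ω' ⊆ {ω : Ω | X ω ∈ ⋃ i, Fi i})
    (hXmeas : ∀ i, MeasurableSet (X ⁻¹' Fi i))
    (g : G) :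
    ENNReal.ofReal (c * min (((volume : Measure Ω) Ω').toReal / 2)
        (((volume : Measure Ω) Ω').toReal - ⨆ i : Fin M, ((volume : Measure Ω) (Ω' ∩ X ⁻¹' Fi i)).toReal)) ≤
      ∫⁻ ω in Ω', ENNReal.ofReal ‖S (X ω) - g‖ ∂(volume : Measure Ω) := by
  have : Nonempty (Fin M) := ⟨⟨0, hM⟩⟩
  set μ := (volume : Measure Ω) with hμ
  set p := (μ Ω').toReal with hp
  set m := ⨆ i : Fin M, (μ (Ω' ∩ X ⁻¹' Fi i)).toReal with hm
  have hfin : ∀ s : Set Ω, μ s ≠ ⊤ := fun s => measure_ne_top μ s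
  have hple : ∀ i, (μ (Ω' ∩ X ⁻¹' Fi i)).toReal ≤ p :=
    fun i => ENNReal.toReal_mono (hfin _) (measure_mono Set.inter_subset_left)
  have hbdd : BddAbove (Set.range fun i : Fin M => (μ (Ω' ∩ X ⁻¹' Fi i)).toReal) :=
    (Set.finite_range _).bddAbove
  have hmp : m ≤ p := ciSup_le hple
  have hp0 : (0:ℝ) ≤ p := ENNReal.toReal_nonneg
  by_cases hcase : ∀ i : Fin M, ∀ x ∈ Fi i, c/2 ≤ ‖S x - g‖
  · have hpt : ∀ ω ∈ Ω', ENNReal.ofReal (c/2) ≤ ENNReal.ofReal ‖S (X ω) - g‖ := by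
      intro ω hω
      obtain ⟨i, hi⟩ := Set.mem_iUnion.1 (hΩ' hω)
      exact ENNReal.ofReal_le_ofReal (hcase i _ hi)
    calc ENNReal.ofReal (c * min (p/2) (p - m))
        ≤ ENNReal.ofReal (c/2 * p) := by
          apply ENNReal.ofReal_le_ofReal
          have := min_le_left (p/2) (p - m)
          nlinarith [min_le_left (p/2) (p - m)]
      _ = ENNReal.ofReal (c/2) * μ Ω' := by
          rw [ENNReal.ofReal_mul (by positivity), hp, ENNReal.ofReal_toReal (hfin _)]
      _ = ∫⁻ _ in Ω', ENNReal.ofReal (c/2) ∂μ := (setLIntegral_const _ _).symm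
      _ ≤ _ := lintegral_mono_ae ((ae_restrict_iff' hΩ'meas).2 (ae_of_all _ hpt))
  · push_neg at hcase
    obtain ⟨i₀, a, ha, hlt⟩ := hcase
    set s := S '' Fi i₀ with hs
    have hsne : s.Nonempty := ⟨S a, a, ha, rfl⟩
    set D := Metric.infDist g s with hD
    have hD0 : (0:ℝ) ≤ D := Metric.infDist_nonneg
    have hDlt : D < c/2 := by
      have h1 := Metric.infDist_le_dist_of_mem (x := g) (show S a ∈ s from ⟨a, ha, rfl⟩)
      rw [dist_eq_norm, norm_sub_rev] at h1
      linarith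
    set A := Ω' ∩ X ⁻¹' Fi i₀ with hA
    set B := Ω' \ X ⁻¹' Fi i₀ with hB
    have hAm : MeasurableSet A := hΩ'meas.inter (hXmeas i₀)
    have hBm : MeasurableSet B := hΩ'meas.diff (hXmeas i₀)
    set q := (μ A).toReal with hq
    have hq0 : (0:ℝ) ≤ q := ENNReal.toReal_nonneg
    have hqm : q ≤ m := le_ciSup hbdd i₀
    have hsum : μ A + μ B = μ Ω' := measure_inter_add_diff Ω' (hXmeas i₀)
    have hBtr : (μ B).toReal = p - q := by
      have h2 := congrArg ENNReal.toReal hsum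
      rw [ENNReal.toReal_add (hfin _) (hfin _)] at h2
      rw [← hq, ← hp] at h2
      linarith
    have hptA : ∀ ω ∈ A, ENNReal.ofReal D ≤ ENNReal.ofReal ‖S (X ω) - g‖ := by
      intro ω hω
      apply ENNReal.ofReal_le_ofReal
      have h1 := Metric.infDist_le_dist_of_mem (x := g) (show S (X ω) ∈ s from ⟨X ω, hω.2, rfl⟩)
      rwa [dist_eq_norm, norm_sub_rev] at h1
    have hptB : ∀ ω ∈ B, ENNReal.ofReal (c - D) ≤ ENNReal.ofReal ‖S (X ω) - g‖ := by
      intro ω hω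
      apply ENNReal.ofReal_le_ofReal
      obtain ⟨i, hi⟩ := Set.mem_iUnion.1 (hΩ' hω.1)
      have hii : i ≠ i₀ := by rintro rfl; exact hω.2 hi
      have key : c - ‖S (X ω) - g‖ ≤ D := by
        by_contra hcon
        push_neg at hcon
        obtain ⟨y, ⟨b, hb, rfl⟩, hy⟩ := (Metric.infDist_lt_iff hsne).1 hcon
        have h1 : c ≤ ‖S (X ω) - S b‖ := hsep i i₀ hii _ ⟨X ω, hi, rfl⟩ _ ⟨b, hb, rfl⟩
        have h2 := dist_triangle (S (X ω)) g (S b)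
        rw [dist_eq_norm, dist_eq_norm] at h2
        linarith
      linarith
    have hint : ENNReal.ofReal D * μ A + ENNReal.ofReal (c - D) * μ B ≤
        ∫⁻ ω in Ω', ENNReal.ofReal ‖S (X ω) - g‖ ∂μ := by
      have hsplit : (Ω' : Set Ω) = A ∪ B := (Set.inter_union_diff Ω' _).symm
      rw [hsplit, lintegral_union hBm (Set.disjoint_sdiff_right.mono_left Set.inter_subset_right)]
      refine add_le_add ?_ ?_
      · calc ENNReal.ofReal D * μ A = ∫⁻ _ in A, ENNReal.ofReal D ∂μ := (setLIntegral_const _ _).symm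
          _ ≤ _ := lintegral_mono_ae ((ae_restrict_iff' hAm).2 (ae_of_all _ hptA))
      · calc ENNReal.ofReal (c - D) * μ B = ∫⁻ _ in B, ENNReal.ofReal (c - D) ∂μ :=
            (setLIntegral_const _ _).symm
          _ ≤ _ := lintegral_mono_ae ((ae_restrict_iff' hBm).2 (ae_of_all _ hptB))
    refine le_trans ?_ hint
    have hμA : μ A = ENNReal.ofReal q := (ENNReal.ofReal_toReal (hfin _)).symm
    have hμB : μ B = ENNReal.ofReal (p - q) := by rw [← hBtr, ENNReal.ofReal_toReal (hfin _)]
    rw [hμA, hμB, ← ENNReal.ofReal_mul hD0, ← ENNReal.ofReal_mul (by linarith),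
      ← ENNReal.ofReal_add (mul_nonneg hD0 hq0) (mul_nonneg (by linarith) (by linarith))]
    apply ENNReal.ofReal_le_ofReal
    rcases le_total (p/2) (p - m) with hmin | hmin
    · rw [min_eq_left hmin]
      nlinarith [mul_nonneg (by linarith : (0:ℝ) ≤ c - 2*D) (by linarith : (0:ℝ) ≤ m - q),
        mul_nonneg (by linarith : (0:ℝ) ≤ c - 2*D) (by linarith : (0:ℝ) ≤ p/2 - m)]
    · rw [min_eq_right hmin]
      nlinarith [mul_nonneg (by linarith : (0:ℝ) ≤ c - 2*D) (by linarith : (0:ℝ) ≤ m - q),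
        mul_nonneg hD0 (by linarith : (0:ℝ) ≤ 2*m - p)]
end

section
/- Let b₁,…,b_n ∈ ℝ^n and let Π_{ℓ−1} denote the orthogonal projection onto the orthogonal complement of span{b₁,…,b_{ℓ−1}} (Π₀ = Id). Define R_i = {Σ_{ℓ=1}^i α_ℓ Π_{ℓ−1}b_ℓ : |α_ℓ| ≤ 1}. Then for every i ∈ [n], R_i ⊆ {Σ_{ℓ=1}^i z_ℓ b_ℓ : Σ_{ℓ=1}^i z_ℓ² ≤ (4^i − 1)/3}, provided each b_ℓ satisfies that b_ℓ − Π_{ℓ−1}b_ℓ lies in R_{ℓ−1}. -/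
open Finset

noncomputable def projPerp {n : ℕ} (b : Fin n → EuclideanSpace ℝ (Fin n)) (i : ℕ) :
    EuclideanSpace ℝ (Fin n) → EuclideanSpace ℝ (Fin n) :=
  fun v => (Submodule.orthogonalProjectionOnto
    ((Submodule.span ℝ (b '' {j : Fin n | (j : ℕ) < i}))ᗮ) v : EuclideanSpace ℝ (Fin n))

noncomputable def rect {n : ℕ} (b : Fin n → EuclideanSpace ℝ (Fin n)) (i : ℕ) :
    Set (EuclideanSpace ℝ (Fin n)) :=
  {x | ∃ α : Fin n → ℝ, (∀ ℓ, |α ℓ| ≤ 1) ∧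
    x = ∑ ℓ ∈ univ.filter (fun ℓ : Fin n => (ℓ : ℕ) < i),
          α ℓ • projPerp b (ℓ : ℕ) (b ℓ)}

/-! Only the relation `b ℓ - p ℓ ∈ R_ℓ` between `b ℓ` and `p ℓ = Π_{ℓ-1} b_ℓ` matters, not that
`p ℓ` is a projection. By induction on `i`, a point `y + a • p i` of `R_{i+1}` (with `y ∈ R_i` and
`|a| ≤ 1`) is rewritten through `p i = b i - (b i - p i)`, where both `y` and `b i - p i` lie in
`R_i`; this at most doubles the earlier coefficients, so the coefficient of `b ℓ` is at most
`2 ^ (i - 1 - ℓ)` in absolute value, and the squares sum to at most `∑_{k<i} 4^k = (4^i - 1)/3`. -/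

section

variable {M : Type*} [AddCommMonoid M] {n : ℕ}

theorem sum_filter_val_lt_succ {i : ℕ} (hi : i < n) (f : Fin n → M) :
    ∑ ℓ ∈ univ.filter (fun ℓ : Fin n => (ℓ : ℕ) < i + 1), f ℓ
      = f ⟨i, hi⟩ + ∑ ℓ ∈ univ.filter (fun ℓ : Fin n => (ℓ : ℕ) < i), f ℓ := by
  rw [← sum_insert (by simp)]
  congr 1
  ext ℓ
  simp only [Order.lt_add_one_iff, mem_filter, mem_univ, true_and, mem_insert, Fin.ext_iff]
  omega

theorem sum_filter_val_lt_eq_sum_range {i : ℕ} (hi : i ≤ n) (f : ℕ → M) :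
    ∑ ℓ ∈ univ.filter (fun ℓ : Fin n => (ℓ : ℕ) < i), f ℓ = ∑ k ∈ range i, f k := by
  have : (univ.filter (fun ℓ : Fin n => (ℓ : ℕ) < i)).map Fin.valEmbedding = range i := by
    ext k
    simp only [mem_map, mem_filter, mem_univ, true_and, Fin.valEmbedding_apply, mem_range]
    exact ⟨fun ⟨ℓ, hℓ, hk⟩ => hk ▸ hℓ, fun hk => ⟨⟨k, by omega⟩, hk, rfl⟩⟩
  rw [← this, sum_map]
  rfl

end

section

variable {M : Type*} [AddCommGroup M] [Module ℝ M] {n : ℕ}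

def symmParallelepiped (p : Fin n → M) (i : ℕ) : Set M :=
  {x | ∃ α : Fin n → ℝ, (∀ ℓ, |α ℓ| ≤ 1) ∧
    x = ∑ ℓ ∈ univ.filter (fun ℓ : Fin n => (ℓ : ℕ) < i), α ℓ • p ℓ}

theorem rect_eq_symmParallelepiped (b : Fin n → EuclideanSpace ℝ (Fin n)) (i : ℕ) :
    rect b i = symmParallelepiped (fun ℓ => projPerp b ℓ (b ℓ)) i :=
  rfl

theorem exists_add_smul_of_mem_symmParallelepiped_succ {p : Fin n → M} {i : ℕ} (hi : i < n)
    {x : M} (hx : x ∈ symmParallelepiped p (i + 1)) :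
    ∃ y ∈ symmParallelepiped p i, ∃ a : ℝ, |a| ≤ 1 ∧ x = y + a • p ⟨i, hi⟩ := by
  obtain ⟨α, hα, rfl⟩ := hx
  exact ⟨_, ⟨α, hα, rfl⟩, α ⟨i, hi⟩, hα _, by rw [sum_filter_val_lt_succ hi, add_comm]⟩

theorem exists_abs_le_two_pow_of_mem_symmParallelepiped {p b : Fin n → M}
    (hb : ∀ ℓ : Fin n, b ℓ - p ℓ ∈ symmParallelepiped p ℓ) :
    ∀ i ≤ n, ∀ x ∈ symmParallelepiped p i, ∃ z : Fin n → ℝ,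
      (∀ ℓ : Fin n, (ℓ : ℕ) < i → |z ℓ| ≤ 2 ^ (i - 1 - ℓ)) ∧
        x = ∑ ℓ ∈ univ.filter (fun ℓ : Fin n => (ℓ : ℕ) < i), z ℓ • b ℓ := by
  intro i
  induction i with
  | zero =>
    rintro - x ⟨α, -, rfl⟩
    exact ⟨0, by simp, by simp⟩
  | succ i ih =>
    intro hin x hx
    have hi : i < n := hin
    set I : Fin n := ⟨i, hi⟩
    obtain ⟨y, hy, a, ha, rfl⟩ := exists_add_smul_of_mem_symmParallelepiped_succ hi hx
    obtain ⟨u, hu, rfl⟩ := ih hi.le y hy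
    obtain ⟨v, hv, hbv⟩ := ih hi.le _ (hb I)
    refine ⟨Function.update (u - a • v) I a, fun ℓ hℓ => ?_, ?_⟩
    · rcases (Nat.lt_succ_iff_lt_or_eq.mp hℓ) with hℓ | rfl
      · have hℓI : ℓ ≠ I := fun h => hℓ.ne (congrArg Fin.val h)
        have hpow : (2 : ℝ) ^ (i + 1 - 1 - ℓ) = 2 ^ (i - 1 - ℓ) + 2 ^ (i - 1 - ℓ) := by
          rw [show i + 1 - 1 - ℓ = i - 1 - ℓ + 1 by omega, pow_succ, mul_two]
        rw [Function.update_of_ne hℓI, hpow]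
        calc |u ℓ - a * v ℓ| ≤ |u ℓ| + |a| * |v ℓ| := by rw [← abs_mul]; exact abs_sub _ _
          _ ≤ 2 ^ (i - 1 - ℓ) + 1 * 2 ^ (i - 1 - ℓ) := by
            gcongr
            exacts [hu ℓ hℓ, hv ℓ hℓ]
          _ = _ := by rw [one_mul]
      · simpa [I] using ha
    · have hpI : p I = b I - ∑ ℓ ∈ univ.filter (fun ℓ : Fin n => (ℓ : ℕ) < i), v ℓ • b ℓ := by
        rw [← hbv, sub_sub_cancel]
      have hupd : ∀ ℓ ∈ univ.filter (fun ℓ : Fin n => (ℓ : ℕ) < i),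
          Function.update (u - a • v) I a ℓ • b ℓ = u ℓ • b ℓ - a • v ℓ • b ℓ := by
        intro ℓ hℓ
        have hℓI : ℓ ≠ I := fun h => (mem_filter.mp hℓ).2.ne (congrArg Fin.val h)
        simp [Function.update_of_ne hℓI, sub_smul, mul_smul]
      rw [sum_filter_val_lt_succ hi, sum_congr rfl hupd, sum_sub_distrib, ← smul_sum, hpI,
        Function.update_self, smul_sub]
      abel

end

theorem sum_sq_le_of_abs_le_two_pow {n i : ℕ} (hi : i ≤ n) {z : Fin n → ℝ}
    (hz : ∀ ℓ : Fin n, (ℓ : ℕ) < i → |z ℓ| ≤ 2 ^ (i - 1 - ℓ)) :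
    ∑ ℓ ∈ univ.filter (fun ℓ : Fin n => (ℓ : ℕ) < i), z ℓ ^ 2 ≤ ((4 : ℝ) ^ i - 1) / 3 := by
  calc ∑ ℓ ∈ univ.filter (fun ℓ : Fin n => (ℓ : ℕ) < i), z ℓ ^ 2
      ≤ ∑ ℓ ∈ univ.filter (fun ℓ : Fin n => (ℓ : ℕ) < i), (4 : ℝ) ^ (i - 1 - ℓ) := by
        refine sum_le_sum fun ℓ hℓ => ?_
        rw [show (4 : ℝ) = 2 ^ 2 by norm_num, ← pow_mul, mul_comm, pow_mul, ← sq_abs]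
        gcongr
        exact hz ℓ (mem_filter.mp hℓ).2
    _ = ∑ k ∈ range i, (4 : ℝ) ^ k := by
        rw [sum_filter_val_lt_eq_sum_range hi (fun k => (4 : ℝ) ^ (i - 1 - k)),
          sum_range_reflect (fun k => (4 : ℝ) ^ k)]
    _ = ((4 : ℝ) ^ i - 1) / 3 := by rw [geom_sum_eq (by norm_num)]; norm_num

theorem rect_subset_ellipsoid {n : ℕ} (b : Fin n → EuclideanSpace ℝ (Fin n))
    (hb : ∀ ℓ : Fin n, b ℓ - projPerp b (ℓ : ℕ) (b ℓ) ∈ rect b (ℓ : ℕ)) :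
    ∀ i : ℕ, i ≤ n → ∀ x ∈ rect b i,
      ∃ z : Fin n → ℝ,
        (∑ ℓ ∈ univ.filter (fun ℓ : Fin n => (ℓ : ℕ) < i), (z ℓ) ^ 2)
            ≤ ((4 : ℝ) ^ i - 1) / 3 ∧
        x = ∑ ℓ ∈ univ.filter (fun ℓ : Fin n => (ℓ : ℕ) < i), z ℓ • b ℓ := by
  intro i hi x hx
  rw [rect_eq_symmParallelepiped] at hx
  obtain ⟨z, hz, rfl⟩ := exists_abs_le_two_pow_of_mem_symmParallelepiped hb i hi x hx
  exact ⟨z, sum_sq_le_of_abs_le_two_pow hi hz, rfl⟩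
end

section
/- Let N ∈ ℝ^{n×m} and for an index set 𝔧 ⊆ [m] let P_𝔧 be the coordinate projection onto coordinates in 𝔧. Then for 𝔧' ⊆ 𝔧 ⊆ [m], the ellipsoid E_{𝔧'} := √(N P_{𝔧'} Nᵀ)(B₂ⁿ) is contained in E_𝔧 := √(N P_𝔧 Nᵀ)(B₂ⁿ). -/
/-!
The image `M(B)` of the Euclidean unit ball under a real matrix `M` is compact and convex, with
support function `w ↦ ‖Mᵀ w‖`. Hence `S(B) ⊆ T(B)` as soon as `‖Sᵀ w‖ ≤ ‖Tᵀ w‖` for every `w`: a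
point of `S(B)` outside `T(B)` would be strictly separated from it by a hyperplane, contradicting
this inequality for the hyperplane's normal. For the symmetric square root `S` of
`N P_𝔧 Nᵀ` one has `‖S w‖² = ⟨w, N P_𝔧 Nᵀ w⟩ = ∑_{j ∈ 𝔧} (Nᵀ w)_j²`, which is monotone in `𝔧`.
-/

open Matrix

namespace Matrix.PosSemidef

open scoped ComplexOrder

/-- The positive semidefinite square root, as defined in Mathlib (Dec 2024), since removed. -/
noncomputable def sqrt {n 𝕜 : Type*} [Fintype n] [RCLike 𝕜] [DecidableEq n] {A : Matrix n n 𝕜}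
    (hA : PosSemidef A) : Matrix n n 𝕜 :=
  hA.1.eigenvectorUnitary.1 * diagonal ((↑) ∘ (√·) ∘ hA.1.eigenvalues) *
    (star hA.1.eigenvectorUnitary : Matrix n n 𝕜)

end Matrix.PosSemidef

def euclideanUnitBall (ι : Type*) [Fintype ι] : Set (ι → ℝ) :=
  {y | ∑ i, y i ^ 2 ≤ 1}

section UnitBall

variable {ι κ : Type*} [Fintype ι] [Fintype κ]

theorem euclideanUnitBall_eq_image :
    euclideanUnitBall ι = EuclideanSpace.equiv ι ℝ '' Metric.closedBall 0 1 := by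
  rw [EuclideanSpace.closedBall_zero_eq 1 zero_le_one, one_pow,
    ContinuousLinearEquiv.image_eq_preimage_symm]
  rfl

theorem convex_euclideanUnitBall : Convex ℝ (euclideanUnitBall ι) := by
  rw [euclideanUnitBall_eq_image]
  exact (convex_closedBall 0 1).linear_image (EuclideanSpace.equiv ι ℝ).toLinearMap

theorem isCompact_euclideanUnitBall : IsCompact (euclideanUnitBall ι) := by
  rw [euclideanUnitBall_eq_image]
  exact (isCompact_closedBall 0 1).image (EuclideanSpace.equiv ι ℝ).continuous

theorem dotProduct_mulVec_le_of_mem_euclideanUnitBall (M : Matrix ι κ ℝ) (w : ι → ℝ)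
    {y : κ → ℝ} (hy : y ∈ euclideanUnitBall κ) :
    w ⬝ᵥ M *ᵥ y ≤ √(∑ j, (Mᵀ *ᵥ w) j ^ 2) := by
  calc w ⬝ᵥ M *ᵥ y = ∑ j, (Mᵀ *ᵥ w) j * y j := by
        rw [dotProduct_mulVec, ← mulVec_transpose]; rfl
    _ ≤ √(∑ j, (Mᵀ *ᵥ w) j ^ 2) * √(∑ j, y j ^ 2) := Real.sum_mul_le_sqrt_mul_sqrt _ _ _
    _ ≤ √(∑ j, (Mᵀ *ᵥ w) j ^ 2) := by
        refine mul_le_of_le_one_right (Real.sqrt_nonneg _) ?_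
        exact Real.sqrt_le_one.mpr hy

theorem exists_mem_euclideanUnitBall_dotProduct_mulVec_eq (M : Matrix ι κ ℝ) (w : ι → ℝ) :
    ∃ y ∈ euclideanUnitBall κ, w ⬝ᵥ M *ᵥ y = √(∑ j, (Mᵀ *ᵥ w) j ^ 2) := by
  set t := Mᵀ *ᵥ w
  set r := √(∑ j, t j ^ 2)
  have hr : r ^ 2 = ∑ j, t j ^ 2 := Real.sq_sqrt (Finset.sum_nonneg fun j _ => sq_nonneg _)
  rcases (Real.sqrt_nonneg (∑ j, t j ^ 2)).eq_or_lt with hr0 | hrpos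
  · exact ⟨0, by simp [euclideanUnitBall], by simp [r, ← hr0]⟩
  refine ⟨r⁻¹ • t, ?_, ?_⟩
  · have : ∑ j, (r⁻¹ • t) j ^ 2 = r⁻¹ ^ 2 * r ^ 2 := by
      simp only [Pi.smul_apply, smul_eq_mul, mul_pow, ← Finset.mul_sum, hr]
    change ∑ j, (r⁻¹ • t) j ^ 2 ≤ 1
    rw [this, ← mul_pow, inv_mul_cancel₀ hrpos.ne', one_pow]
  · calc w ⬝ᵥ M *ᵥ (r⁻¹ • t) = r⁻¹ * ∑ j, t j ^ 2 := by
          rw [mulVec_smul, dotProduct_smul, dotProduct_mulVec, ← mulVec_transpose, smul_eq_mul]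
          simp only [dotProduct, sq, t]
      _ = r := by rw [← hr]; field_simp

theorem mulVec_image_euclideanUnitBall_subset {κ' : Type*} [Fintype κ']
    (S : Matrix ι κ ℝ) (T : Matrix ι κ' ℝ)
    (h : ∀ w, ∑ j, (Sᵀ *ᵥ w) j ^ 2 ≤ ∑ j, (Tᵀ *ᵥ w) j ^ 2) :
    S.mulVec '' euclideanUnitBall κ ⊆ T.mulVec '' euclideanUnitBall κ' := by
  classical
  rintro _ ⟨y, hy, rfl⟩
  by_contra hv
  obtain ⟨f, u, hfK, hfv⟩ := geometric_hahn_banach_closed_point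
    (convex_euclideanUnitBall.linear_image T.mulVecLin)
    (isCompact_euclideanUnitBall.image (continuous_const.matrix_mulVec continuous_id)).isClosed hv
  set w : ι → ℝ := fun i => f fun j => if i = j then 1 else 0
  have hf : ∀ x, f x = w ⬝ᵥ x := fun x => by
    rw [← f.coe_coe, LinearMap.pi_apply_eq_sum_univ, dotProduct_comm]
    simp only [dotProduct, smul_eq_mul, w, ContinuousLinearMap.coe_coe]
  obtain ⟨z, hz, hTz⟩ := exists_mem_euclideanUnitBall_dotProduct_mulVec_eq T w
  have hlt : √(∑ j, (Tᵀ *ᵥ w) j ^ 2) < u := by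
    simpa only [← hTz, hf, mulVecLin_apply] using hfK _ ⟨z, hz, rfl⟩
  have hle : w ⬝ᵥ S *ᵥ y ≤ √(∑ j, (Tᵀ *ᵥ w) j ^ 2) :=
    (dotProduct_mulVec_le_of_mem_euclideanUnitBall S w hy).trans (Real.sqrt_le_sqrt (h w))
  rw [hf] at hfv
  linarith

end UnitBall

namespace Matrix.PosSemidef

open scoped ComplexOrder

section

variable {ι 𝕜 : Type*} [Fintype ι] [DecidableEq ι] [RCLike 𝕜] {A : Matrix ι ι 𝕜}

theorem posSemidef_sqrt (hA : A.PosSemidef) : hA.sqrt.PosSemidef := by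
  have hD : (diagonal ((↑) ∘ (√·) ∘ hA.1.eigenvalues : ι → 𝕜)).PosSemidef :=
    posSemidef_diagonal_iff.mpr fun i => by
      simpa only [Function.comp_apply, RCLike.ofReal_nonneg] using Real.sqrt_nonneg _
  simpa [sqrt, star_eq_conjTranspose] using
    hD.mul_mul_conjTranspose_same (hA.1.eigenvectorUnitary : Matrix ι ι 𝕜)

theorem sqrt_mul_self (hA : A.PosSemidef) : hA.sqrt * hA.sqrt = A := by
  set U : Matrix ι ι 𝕜 := hA.1.eigenvectorUnitary.1
  set D := diagonal ((↑) ∘ (√·) ∘ hA.1.eigenvalues : ι → 𝕜)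
  have hU : star U * U = 1 := Unitary.star_mul_self_of_mem hA.1.eigenvectorUnitary.2
  have hD : D * D = diagonal ((↑) ∘ hA.1.eigenvalues) := by
    rw [diagonal_mul_diagonal]
    congr! with i
    simp [← pow_two, ← RCLike.ofReal_pow, Real.sq_sqrt (hA.eigenvalues_nonneg i)]
  calc hA.sqrt * hA.sqrt = U * (D * (star U * U) * D) * star U := by
        simp only [sqrt, mul_assoc]; rfl
    _ = A := by rw [hU, mul_one, hD]; exact hA.1.spectral_theorem.symm

end

variable {ι : Type*} [Fintype ι] [DecidableEq ι] {A B : Matrix ι ι ℝ}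

theorem transpose_sqrt (hA : A.PosSemidef) : hA.sqrtᵀ = hA.sqrt :=
  hA.posSemidef_sqrt.isHermitian

theorem sum_sqrt_mulVec_sq (hA : A.PosSemidef) (w : ι → ℝ) :
    ∑ i, (hA.sqrt *ᵥ w) i ^ 2 = w ⬝ᵥ A *ᵥ w := by
  calc ∑ i, (hA.sqrt *ᵥ w) i ^ 2 = w ᵥ* hA.sqrtᵀ ⬝ᵥ hA.sqrt *ᵥ w := by
        simp only [vecMul_transpose, dotProduct, sq]
    _ = w ⬝ᵥ A *ᵥ w := by
        rw [← dotProduct_mulVec, mulVec_mulVec, hA.transpose_sqrt, hA.sqrt_mul_self]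

theorem sqrt_mulVec_image_euclideanUnitBall_mono (hA : A.PosSemidef) (hB : B.PosSemidef)
    (hAB : ∀ w, w ⬝ᵥ A *ᵥ w ≤ w ⬝ᵥ B *ᵥ w) :
    hA.sqrt.mulVec '' euclideanUnitBall ι ⊆ hB.sqrt.mulVec '' euclideanUnitBall ι :=
  mulVec_image_euclideanUnitBall_subset _ _ fun w => by
    simpa only [transpose_sqrt, sum_sqrt_mulVec_sq] using hAB w

end Matrix.PosSemidef

theorem dotProduct_mul_diagonal_mul_transpose_mulVec {R ι κ : Type*} [CommRing R] [Fintype ι]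
    [Fintype κ] [DecidableEq κ] (N : Matrix ι κ R) (d : κ → R) (w : ι → R) :
    w ⬝ᵥ (N * diagonal d * Nᵀ) *ᵥ w = ∑ j, d j * (Nᵀ *ᵥ w) j ^ 2 := by
  rw [← mulVec_mulVec, ← mulVec_mulVec, dotProduct_mulVec, ← mulVec_transpose,
    dotProduct_comm, dotProduct]
  simp only [mulVec_diagonal, sq, mul_assoc]

theorem ellipsoid_monotone (n m : ℕ) (N : Matrix (Fin n) (Fin m) ℝ)
    (J J' : Finset (Fin m)) (hJJ : J' ⊆ J)
    (hJ' : (N * Matrix.diagonal (fun j => if j ∈ J' then (1 : ℝ) else 0) * Nᵀ).PosSemidef)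
    (hJ : (N * Matrix.diagonal (fun j => if j ∈ J then (1 : ℝ) else 0) * Nᵀ).PosSemidef) :
    hJ'.sqrt.mulVec '' {y : Fin n → ℝ | ∑ i, (y i) ^ 2 ≤ 1}
      ⊆ hJ.sqrt.mulVec '' {y : Fin n → ℝ | ∑ i, (y i) ^ 2 ≤ 1} := by
  refine hJ'.sqrt_mulVec_image_euclideanUnitBall_mono hJ fun w => ?_
  simp only [dotProduct_mul_diagonal_mul_transpose_mulVec]
  refine Finset.sum_le_sum fun j _ => mul_le_mul_of_nonneg_right ?_ (sq_nonneg _)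
  by_cases hj : j ∈ J'
  · simp [hj, hJJ hj]
  · rw [if_neg hj]; split_ifs <;> norm_num
end

section
/- Let 1 ≤ p < q ≤ ∞ and r = 1/p − 1/q. For any x ∈ ℝ^m and k < m, the best k-term approximation error satisfies ‖x − x_k‖_q ≤ k^{−r} ‖x‖_p, where x_k keeps the k largest (in absolute value) coordinates of x and sets the rest to zero. -/
/-!
Let `T` index the `k` largest entries of `x` in absolute value. Every entry outside `T` is
dominated by the `k` entries in `T`, so it is at most `k ^ (-1/p) ‖x‖_p`. The competitor that
keeps `x` on `T` leaves the tail `y = x - x_T`, which satisfies `‖y‖_∞ ≤ k ^ (-1/p) ‖x‖_p` and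
`‖y‖_p ≤ ‖x‖_p`; the interpolation `‖y‖_q ≤ ‖y‖_∞ ^ (1 - p/q) ‖y‖_p ^ (p/q)` combines these into
`k ^ (-(1/p - 1/q)) ‖x‖_p`, and the best approximation does at least as well as this competitor.
-/

open scoped ENNReal

open Finset in
theorem Finset.exists_card_eq_forall_notMem_le_mem {ι α : Type*} [Fintype ι] [LinearOrder α]
    (f : ι → α) {k : ℕ} (hk : k ≤ Fintype.card ι) :
    ∃ T : Finset ι, #T = k ∧ ∀ i ∉ T, ∀ j ∈ T, f i ≤ f j := by
  classical
  induction k with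
  | zero => exact ⟨∅, rfl, by simp⟩
  | succ k ih =>
    obtain ⟨T, hT, hTtop⟩ := ih (by omega)
    have hcompl : Tᶜ.Nonempty := by rw [← card_pos, card_compl]; omega
    obtain ⟨a, ha, hamax⟩ := exists_max_image Tᶜ f hcompl
    refine ⟨insert a T, by rw [card_insert_of_notMem (mem_compl.1 ha), hT], fun i hi j hj => ?_⟩
    rw [mem_insert, not_or] at hi
    rcases mem_insert.1 hj with rfl | hj
    · exact hamax i (mem_compl.2 hi.2)
    · exact hTtop i hi.2 j hj

namespace PiLp

open Finset WithLp

variable {ι : Type*} [Fintype ι] {β : ι → Type*} [∀ i, SeminormedAddCommGroup (β i)]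
  {p q : ℝ≥0∞}

theorem norm_toLp_rpow (hp : 0 < p.toReal) (x : ∀ i, β i) :
    ‖toLp p x‖ ^ p.toReal = ∑ i, ‖x i‖ ^ p.toReal := by
  rw [norm_eq_sum hp, ← Real.rpow_mul (by positivity), one_div_mul_cancel hp.ne',
    Real.rpow_one]

theorem norm_toLp_nonneg (hp : 0 < p.toReal) (x : ∀ i, β i) : 0 ≤ ‖toLp p x‖ := by
  rw [norm_eq_sum hp]
  positivity

theorem norm_toLp_le_norm_toLp (hp : 0 < p.toReal) {x y : ∀ i, β i}
    (h : ∀ i, ‖y i‖ ≤ ‖x i‖) : ‖toLp p y‖ ≤ ‖toLp p x‖ := by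
  rw [norm_eq_sum hp, norm_eq_sum hp]
  gcongr with i
  exact h i

theorem card_rpow_mul_le_norm_toLp (hp : 0 < p.toReal) (x : ∀ i, β i) (T : Finset ι) {c : ℝ}
    (hc : 0 ≤ c) (h : ∀ j ∈ T, c ≤ ‖x j‖) : (#T : ℝ) ^ (1 / p.toReal) * c ≤ ‖toLp p x‖ := by
  have hsum : (#T : ℝ) * c ^ p.toReal ≤ ‖toLp p x‖ ^ p.toReal :=
    calc (#T : ℝ) * c ^ p.toReal = ∑ _j ∈ T, c ^ p.toReal := by simp
      _ ≤ ∑ j ∈ T, ‖x j‖ ^ p.toReal := by gcongr with j hj; exact h j hj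
      _ ≤ ∑ j, ‖x j‖ ^ p.toReal :=
        sum_le_sum_of_subset_of_nonneg (subset_univ T) fun j _ _ => by positivity
      _ = ‖toLp p x‖ ^ p.toReal := (norm_toLp_rpow hp x).symm
  rw [← Real.rpow_le_rpow_iff (by positivity) (norm_toLp_nonneg hp x) hp, Real.mul_rpow (by positivity) hc,
    ← Real.rpow_mul (by positivity), one_div_mul_cancel hp.ne', Real.rpow_one]
  exact hsum

/-- For `q = ∞` the exponent `p.toReal / q.toReal` is `0` (as `∞.toReal = 0`), and the bound is
just `‖x‖_∞ ≤ M`. -/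
theorem norm_toLp_le_rpow_mul_norm_toLp_rpow (hp : 0 < p.toReal) (hpq : p ≤ q) (x : ∀ i, β i)
    {M : ℝ} (hM : 0 ≤ M) (h : ∀ i, ‖x i‖ ≤ M) :
    ‖toLp q x‖ ≤ M ^ (1 - p.toReal / q.toReal) * ‖toLp p x‖ ^ (p.toReal / q.toReal) := by
  rcases eq_or_ne q ⊤ with rfl | hq
  · simpa using (pi_norm_le_iff_of_nonneg hM).2 h
  set P := p.toReal
  set Q := q.toReal
  have hPQ : P ≤ Q := ENNReal.toReal_mono hq hpq
  have hQ : 0 < Q := hp.trans_le hPQ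
  have hpow : ‖toLp q x‖ ^ Q ≤ M ^ (Q - P) * ‖toLp p x‖ ^ P :=
    calc ‖toLp q x‖ ^ Q = ∑ i, ‖x i‖ ^ (Q - P) * ‖x i‖ ^ P := by
          rw [norm_toLp_rpow hQ]
          congr 1 with i
          rw [← Real.rpow_add' (norm_nonneg _) (by simpa using hQ.ne'), sub_add_cancel]
      _ ≤ ∑ i, M ^ (Q - P) * ‖x i‖ ^ P := by
          gcongr with i
          exact h i
      _ = M ^ (Q - P) * ‖toLp p x‖ ^ P := by rw [← mul_sum, norm_toLp_rpow hp]
  calc ‖toLp q x‖ = (‖toLp q x‖ ^ Q) ^ (1 / Q) := by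
        rw [← Real.rpow_mul (norm_toLp_nonneg hQ x), mul_one_div_cancel hQ.ne', Real.rpow_one]
    _ ≤ (M ^ (Q - P) * ‖toLp p x‖ ^ P) ^ (1 / Q) := by
        have := norm_toLp_nonneg hQ x
        gcongr
    _ = M ^ (1 - P / Q) * ‖toLp p x‖ ^ (P / Q) := by
        have := norm_toLp_nonneg hp x
        rw [Real.mul_rpow (by positivity) (by positivity), ← Real.rpow_mul hM,
          ← Real.rpow_mul this]
        congr 2 <;> field_simp

end PiLp

open Finset WithLp PiLp in
theorem best_k_term_approximation_general (m k : ℕ) (hk : 1 ≤ k) (hkm : k < m)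
    (p q : ℝ≥0∞) [Fact (1 ≤ p)] (hpq : p < q)
    (r : ℝ) (hr : r = 1 / p.toReal - 1 / q.toReal)
    (x xk : Fin m → ℝ)
    (hxk_best : ∀ x' : Fin m → ℝ,
      (∃ s : Finset (Fin m), s.card ≤ k ∧ ∀ j ∉ s, x' j = 0) →
      ‖(WithLp.equiv q (Fin m → ℝ)).symm (x - xk)‖
        ≤ ‖(WithLp.equiv q (Fin m → ℝ)).symm (x - x')‖) :
    ‖(WithLp.equiv q (Fin m → ℝ)).symm (x - xk)‖
      ≤ (k : ℝ) ^ (-r) * ‖(WithLp.equiv p (Fin m → ℝ)).symm x‖ := by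
  classical
  simp only [WithLp.equiv_symm_apply] at hxk_best ⊢
  set P := p.toReal
  set Q := q.toReal
  set a := ‖toLp p x‖
  have hP : 0 < P := ENNReal.toReal_pos (one_pos.trans_le Fact.out).ne' (hpq.trans_le le_top).ne
  have ha : 0 ≤ a := norm_toLp_nonneg hP x
  have hk0 : (0 : ℝ) < k := by exact_mod_cast hk
  obtain ⟨T, hT, hTtop⟩ := exists_card_eq_forall_notMem_le_mem (fun i => ‖x i‖)
    (by simpa using hkm.le)
  set x' : Fin m → ℝ := fun i => if i ∈ T then x i else 0
  have htail_le : ∀ i, ‖(x - x') i‖ ≤ ‖x i‖ := fun i => by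
    by_cases hi : i ∈ T <;> simp [x', hi]
  have htail_small : ∀ i, ‖(x - x') i‖ ≤ (k : ℝ) ^ (-(1 / P)) * a := fun i => by
    by_cases hi : i ∈ T
    · simpa [x', hi] using by positivity
    · have := card_rpow_mul_le_norm_toLp hP x T (norm_nonneg (x i)) (hTtop i hi)
      rw [hT] at this
      simp only [x', hi, Pi.sub_apply, if_false, sub_zero]
      rw [Real.rpow_neg hk0.le, ← div_eq_inv_mul, le_div_iff₀' (by positivity)]
      exact this
  calc ‖toLp q (x - xk)‖ ≤ ‖toLp q (x - x')‖ :=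
        hxk_best x' ⟨T, hT.le, fun j hj => by simp [x', hj]⟩
    _ ≤ ((k : ℝ) ^ (-(1 / P)) * a) ^ (1 - P / Q) * ‖toLp p (x - x')‖ ^ (P / Q) :=
        norm_toLp_le_rpow_mul_norm_toLp_rpow hP hpq.le _ (by positivity) htail_small
    _ ≤ ((k : ℝ) ^ (-(1 / P)) * a) ^ (1 - P / Q) * a ^ (P / Q) := by
        have := norm_toLp_nonneg hP (x - x')
        gcongr
        exact norm_toLp_le_norm_toLp hP htail_le
    _ = (k : ℝ) ^ (-r) * a := by
        rw [Real.mul_rpow (by positivity) ha, mul_assoc, ← Real.rpow_add' ha (by simp),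
          sub_add_cancel, Real.rpow_one, ← Real.rpow_mul hk0.le, hr]
        congr 2
        field_simp

theorem best_k_term_approximation (m k : ℕ) (hk : 1 ≤ k) (hkm : k < m)
    (p q : ℝ≥0∞) [Fact (1 ≤ p)] [Fact (1 ≤ q)] (hpq : p < q)
    (r : ℝ) (hr : r = 1 / p.toReal - 1 / q.toReal)
    (x xk : Fin m → ℝ)
    (hxk_sparse : ∃ s : Finset (Fin m), s.card ≤ k ∧ ∀ j ∉ s, xk j = 0)
    (hxk_best : ∀ x' : Fin m → ℝ,
      (∃ s : Finset (Fin m), s.card ≤ k ∧ ∀ j ∉ s, x' j = 0) →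
      ‖(WithLp.equiv q (Fin m → ℝ)).symm (x - xk)‖
        ≤ ‖(WithLp.equiv q (Fin m → ℝ)).symm (x - x')‖) :
    ‖(WithLp.equiv q (Fin m → ℝ)).symm (x - xk)‖
      ≤ (k : ℝ) ^ (-r) * ‖(WithLp.equiv p (Fin m → ℝ)).symm x‖ :=
  best_k_term_approximation_general m k hk hkm p q hpq r hr x xk hxk_best
end
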